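/- arXiv:2306.16841 — 3 statements merged into one kernel-verified Lean document; each statement's English description precedes it below -/
import Mathlib

section
/- Every measurable pseudo-Anosov homeomorphism F : Σ → Σ is topologically transitive: for all non-empty open subsets U and V of Σ there exists n > 0 such that F^n(U) ∩ V ≠ ∅. -/
open MeasureTheory Set Function Topology Filter
open scoped ENNReal

noncomputable section

variable {S : Type} [TopologicalSpace S] [MeasurableSpace S]

/-- `d` is (the distance function of) a metric on `S` compatible with its topology. -/
def IsCompatibleMetric (S : Type) [TopologicalSpace S] (d : S → S → ℝ) : Prop :=
  (∀ x y, d x y = d y x) ∧ (∀ x y, d x y = 0 ↔ x = y) ∧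
  (∀ x y z, d x z ≤ d x y + d y z) ∧
  (∀ s : Set S, IsOpen s ↔ ∀ x ∈ s, ∃ ε > (0 : ℝ), ∀ y, d x y < ε → y ∈ s)

/-- An immersed line: a continuous injective image of `ℝ`. -/
def IsImmersedLine (ℓ : Set S) : Prop :=
  ∃ f : ℝ → S, Continuous f ∧ Function.Injective f ∧ Set.range f = ℓ

/-- `A` is a closed stream arc of the immersed line `ℓ` with endpoints `x` and `y`. -/
def IsArcIn (ℓ A : Set S) (x y : S) : Prop :=
  ∃ f : ℝ → S, Continuous f ∧ Function.Injective f ∧ Set.range f = ℓ ∧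
    ∃ a b : ℝ, a ≤ b ∧ f a = x ∧ f b = y ∧ A = f '' Set.Icc a b

/-- `A` is a closed stream arc of the immersed line `ℓ`. -/
def IsArc (ℓ A : Set S) : Prop := ∃ x y, IsArcIn ℓ A x y

/-- Topological transversality of two immersed lines at a point `x`: local pieces (arcs) of the
two lines through `x` are, in some chart around `x`, the two coordinate axes. -/
def TransverseAt (ℓ ℓ' : Set S) (x : S) : Prop :=
  ∃ α β : Set S, x ∈ α ∧ x ∈ β ∧ IsArc ℓ α ∧ IsArc ℓ' β ∧
    ∃ U : Set S, IsOpen U ∧ x ∈ U ∧ ∃ e : U ≃ₜ ℝ × ℝ,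
      Subtype.val '' (⇑e ⁻¹' {p : ℝ × ℝ | p.2 = 0}) = α ∩ U ∧
      Subtype.val '' (⇑e ⁻¹' {p : ℝ × ℝ | p.1 = 0}) = β ∩ U

/-- The (manifold) boundary of the surface `S`: points having no neighbourhood
homeomorphic to the plane. -/
def ManifoldBdry (S : Type) [TopologicalSpace S] : Set S :=
  {x : S | ¬ ∃ U : Set S, IsOpen U ∧ x ∈ U ∧ Nonempty (U ≃ₜ ℝ × ℝ)}

/-- An Oxtoby–Ulam (OU) measure on the compact surface `S`: Borel (via the ambient
`BorelSpace` assumption), non-atomic, positive on non-empty open sets, and vanishing on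
the boundary of `S`. -/
structure IsOUMeasure (μ : Measure S) : Prop where
  noAtoms : ∀ x : S, μ {x} = 0
  openPos : ∀ U : Set S, IsOpen U → U.Nonempty → 0 < μ U
  boundaryNull : μ (ManifoldBdry S) = 0

/-- A measured turbulation on `S` (with ambient measure `μ`): a partition of a full
`μ`-measure Borel subset of `S` into streamlines (immersed lines), together with an
OU measure on each streamline which is finite on closed stream arcs. -/
structure MeasuredTurbulation (μ : Measure S) where
  lines : Set (Set S)
  lines_immersed : ∀ ℓ ∈ lines, IsImmersedLine ℓ
  lines_disjoint : lines.PairwiseDisjoint id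
  domain_borel : MeasurableSet (⋃₀ lines)
  domain_full : μ (⋃₀ lines) = 1
  ν : Set S → Measure S
  ν_supported : ∀ ℓ ∈ lines, ν ℓ ℓᶜ = 0
  ν_nonatomic : ∀ ℓ ∈ lines, ∀ x : S, ν ℓ {x} = 0
  ν_arc_pos : ∀ ℓ ∈ lines, ∀ A : Set S, ∀ x y : S, IsArcIn ℓ A x y → x ≠ y → 0 < ν ℓ A
  ν_arc_finite : ∀ ℓ ∈ lines, ∀ A : Set S, ∀ x y : S, IsArcIn ℓ A x y → ν ℓ A < ⊤

namespace MeasuredTurbulation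

variable {μ : Measure S}

/-- Tameness with respect to a given metric `d`: stream arcs of small stream measure are small. -/
def TameWith (T : MeasuredTurbulation μ) (d : S → S → ℝ) : Prop :=
  ∀ ε : ℝ, 0 < ε → ∃ δ : ℝ, 0 < δ ∧
    ∀ ℓ ∈ T.lines, ∀ A : Set S, ∀ x y : S,
      IsArcIn ℓ A x y → T.ν ℓ A < ENNReal.ofReal δ → d x y < ε

/-- A measured turbulation is tame if it is tame with respect to (every, equivalently some)
metric on `S` compatible with its topology. -/
def Tame (T : MeasuredTurbulation μ) : Prop :=
  ∀ d : S → S → ℝ, IsCompatibleMetric S d → T.TameWith d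

/-- Every streamline is dense in `S`. -/
def DenseStreamlines (T : MeasuredTurbulation μ) : Prop := ∀ ℓ ∈ T.lines, Dense ℓ

/-- Two measured turbulations are transverse if almost every point lies on streamlines of both
which intersect transversely there. -/
def TransversePair (Ts Tu : MeasuredTurbulation μ) : Prop :=
  ∃ W : Set S, MeasurableSet W ∧ μ W = 1 ∧
    ∀ x ∈ W, ∃ ℓ ∈ Ts.lines, ∃ ℓ' ∈ Tu.lines, x ∈ ℓ ∧ x ∈ ℓ' ∧ TransverseAt ℓ ℓ' x

end MeasuredTurbulation

/-- A tartan for the (stable, unstable) pair of measured turbulations `(Ts, Tu)`. -/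
structure Tartan {μ : Measure S} (Ts Tu : MeasuredTurbulation μ) where
  Rs : Set S
  Ru : Set S
  borel_s : MeasurableSet Rs
  borel_u : MeasurableSet Ru
  fibs : Set (Set S)
  fibu : Set (Set S)
  fibs_disjoint : fibs.PairwiseDisjoint id
  fibu_disjoint : fibu.PairwiseDisjoint id
  fibs_cover : ⋃₀ fibs = Rs
  fibu_cover : ⋃₀ fibu = Ru
  /-- (a) every stable fiber meets every unstable fiber in exactly one point. -/
  inter_unique : ∀ A ∈ fibs, ∀ B ∈ fibu, ∃! z : S, z ∈ A ∩ B
  /-- The fibers are stream arcs of the corresponding turbulations, and (b) they can be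
  oriented consistently: every stable fiber crosses the unstable fibers in the same order,
  and vice versa. -/
  oriented : ∃ ords ordu : Set S → S → S → Prop,
    (∀ A ∈ fibs, ∃ ℓ ∈ Ts.lines, ∃ f : ℝ → S, Continuous f ∧ Function.Injective f ∧
        Set.range f = ℓ ∧ ∃ a b : ℝ, a ≤ b ∧ A = f '' Set.Icc a b ∧
        ∀ s ∈ Set.Icc a b, ∀ t ∈ Set.Icc a b, (ords A (f s) (f t) ↔ s ≤ t)) ∧
    (∀ B ∈ fibu, ∃ ℓ ∈ Tu.lines, ∃ f : ℝ → S, Continuous f ∧ Function.Injective f ∧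
        Set.range f = ℓ ∧ ∃ a b : ℝ, a ≤ b ∧ B = f '' Set.Icc a b ∧
        ∀ s ∈ Set.Icc a b, ∀ t ∈ Set.Icc a b, (ordu B (f s) (f t) ↔ s ≤ t)) ∧
    (∀ A ∈ fibs, ∀ A' ∈ fibs, ∀ B ∈ fibu, ∀ B' ∈ fibu,
      ∀ p ∈ A ∩ B, ∀ q ∈ A ∩ B', ∀ p' ∈ A' ∩ B, ∀ q' ∈ A' ∩ B',
        (ords A p q ↔ ords A' p' q')) ∧
    (∀ B ∈ fibu, ∀ B' ∈ fibu, ∀ A ∈ fibs, ∀ A' ∈ fibs,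
      ∀ p ∈ B ∩ A, ∀ q ∈ B ∩ A', ∀ p' ∈ B' ∩ A, ∀ q' ∈ B' ∩ A',
        (ordu B p q ↔ ordu B' p' q'))
  /-- (c) the stream measures of the fibers are bounded above. -/
  bounded : ∃ L : ℝ≥0∞, L < ⊤ ∧
    (∀ A ∈ fibs, ∀ ℓ ∈ Ts.lines, A ⊆ ℓ → Ts.ν ℓ A ≤ L) ∧
    (∀ B ∈ fibu, ∀ ℓ ∈ Tu.lines, B ⊆ ℓ → Tu.ν ℓ B ≤ L)
  /-- (d) `Rs ∪ Ru` is contained in an open topological disk. -/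
  in_disk : ∃ U : Set S, IsOpen U ∧ Rs ∪ Ru ⊆ U ∧ Nonempty (U ≃ₜ ℝ × ℝ)

namespace Tartan

variable {μ : Measure S} {Ts Tu : MeasuredTurbulation μ}

/-- The set `R^⋔` of tartan intersection points. -/
def core (R : Tartan Ts Tu) : Set S := R.Rs ∩ R.Ru

/-- The tartan `R` is compatible with the ambient measure `μ`: for all stable and unstable
fibers `𝔰`, `𝔲`, the bijection `ψ : E^𝔰 × E^𝔲 → R^⋔`, `(x, y) ↦ 𝔲(x) ⋔ 𝔰(y)`, is
bi-measurable and pushes `ν_𝔰 × ν_𝔲` forward to `μ` restricted to `R^⋔`. -/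
def Compatible (R : Tartan Ts Tu) : Prop :=
  ∀ 𝔰 ∈ R.fibs, ∀ 𝔲 ∈ R.fibu,
  ∀ ℓs ∈ Ts.lines, 𝔰 ⊆ ℓs → ∀ ℓu ∈ Tu.lines, 𝔲 ⊆ ℓu →
  ∃ ψ : S × S → S,
    (∀ x ∈ 𝔰 ∩ R.core, ∀ y ∈ 𝔲 ∩ R.core,
      ∀ B ∈ R.fibu, x ∈ B → ∀ A ∈ R.fibs, y ∈ A → ψ (x, y) ∈ B ∩ A) ∧
    Set.InjOn ψ ((𝔰 ∩ R.core) ×ˢ (𝔲 ∩ R.core)) ∧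
    ψ '' ((𝔰 ∩ R.core) ×ˢ (𝔲 ∩ R.core)) = R.core ∧
    Measurable ψ ∧
    (∀ E : Set (S × S), E ⊆ (𝔰 ∩ R.core) ×ˢ (𝔲 ∩ R.core) → MeasurableSet E →
      MeasurableSet (ψ '' E)) ∧
    Measure.map ψ (((Ts.ν ℓs).restrict (𝔰 ∩ R.core)).prod
      ((Tu.ν ℓu).restrict (𝔲 ∩ R.core))) = μ.restrict R.core

/-- Image of `B ⊆ E^𝔰` under the holonomy map `h_{𝔰,𝔰'} : E^𝔰 → E^{𝔰'}`, `x ↦ 𝔲(x) ⋔ 𝔰'`. -/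
def holSS (R : Tartan Ts Tu) (𝔰' B : Set S) : Set S :=
  {x' : S | ∃ x ∈ B, ∃ Bu ∈ R.fibu, x ∈ Bu ∧ x' ∈ Bu ∩ 𝔰'}

/-- Image of `B ⊆ E^𝔲` under the holonomy map `h_{𝔲,𝔲'} : E^𝔲 → E^{𝔲'}`, `y ↦ 𝔰(y) ⋔ 𝔲'`. -/
def holUU (R : Tartan Ts Tu) (𝔲' B : Set S) : Set S :=
  {y' : S | ∃ y ∈ B, ∃ A ∈ R.fibs, y ∈ A ∧ y' ∈ A ∩ 𝔲'}

/-- "`𝔲(x) ⋔ 𝔰(y) ∈ A`": the intersection point of the unstable fiber through `x` and the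
stable fiber through `y` belongs to `A`. -/
def sectMem (R : Tartan Ts Tu) (A : Set S) (x y : S) : Prop :=
  ∃ B ∈ R.fibu, x ∈ B ∧ ∃ C ∈ R.fibs, y ∈ C ∧ ∃ z ∈ B ∩ C, z ∈ A

/-- `ν_{𝔲(x)}(A ∩ 𝔲(x))`: the stream measure of `A` along the unstable fiber through `x`. -/
def fiberMeasU (R : Tartan Ts Tu) (A : Set S) (x : S) : ℝ≥0∞ :=
  ⨆ (B : Set S) (_ : B ∈ R.fibu) (_ : x ∈ B) (ℓ : Set S) (_ : ℓ ∈ Tu.lines) (_ : B ⊆ ℓ),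
    Tu.ν ℓ (A ∩ B)

/-- `ν_{𝔰(y)}(A ∩ 𝔰(y))`: the stream measure of `A` along the stable fiber through `y`. -/
def fiberMeasS (R : Tartan Ts Tu) (A : Set S) (y : S) : ℝ≥0∞ :=
  ⨆ (C : Set S) (_ : C ∈ R.fibs) (_ : y ∈ C) (ℓ : Set S) (_ : ℓ ∈ Ts.lines) (_ : C ⊆ ℓ),
    Ts.ν ℓ (A ∩ C)

end Tartan

/-- The union of the stable streamlines containing fibers of `R`. -/
def stableSaturation {μ : Measure S} {Ts Tu : MeasuredTurbulation μ} (R : Tartan Ts Tu) :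
    Set S :=
  ⋃₀ {ℓ : Set S | ℓ ∈ Ts.lines ∧ ∃ A ∈ R.fibs, A ⊆ ℓ}

/-- The union of the unstable streamlines containing fibers of `R`. -/
def unstableSaturation {μ : Measure S} {Ts Tu : MeasuredTurbulation μ} (R : Tartan Ts Tu) :
    Set S :=
  ⋃₀ {ℓ : Set S | ℓ ∈ Tu.lines ∧ ∃ B ∈ R.fibu, B ⊆ ℓ}

/-- The pair `(Ts, Tu)` is full: countably many compatible tartans cover a full measure
subset of `S`, and every non-empty open set contains a positive measure compatible tartan. -/
def FullPair {μ : Measure S} (Ts Tu : MeasuredTurbulation μ) : Prop :=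
  (∃ R : ℕ → Tartan Ts Tu, (∀ i, (R i).Compatible) ∧ μ (⋃ i, (R i).core) = 1) ∧
  (∀ U : Set S, IsOpen U → U.Nonempty →
    ∃ R : Tartan Ts Tu, R.Compatible ∧ 0 < μ R.core ∧ R.Rs ∪ R.Ru ⊆ U)

/-- `(Ts, Tu)` are measurable pseudo-Anosov turbulations: transverse, tame, full, with
dense streamlines. -/
def MPATurbulations {μ : Measure S} (Ts Tu : MeasuredTurbulation μ) : Prop :=
  Ts.TransversePair Tu ∧ Ts.Tame ∧ Tu.Tame ∧ FullPair Ts Tu ∧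
    Ts.DenseStreamlines ∧ Tu.DenseStreamlines

/-- `F` is a measurable pseudo-Anosov homeomorphism with invariant turbulations `(Ts, Tu)`
and dilatation `lam > 1`. -/
structure IsMPA (μ : Measure S) (F : S ≃ₜ S) (Ts Tu : MeasuredTurbulation μ)
    (lam : ℝ) : Prop where
  measurePreserving : MeasurePreserving (⇑F) μ μ
  one_lt_lam : 1 < lam
  turbulations : MPATurbulations Ts Tu
  stable_image : ∀ ℓ ∈ Ts.lines, ⇑F '' ℓ ∈ Ts.lines
  unstable_image : ∀ ℓ ∈ Tu.lines, ⇑F '' ℓ ∈ Tu.lines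
  stable_contract : ∀ ℓ ∈ Ts.lines, ∀ A : Set S, ∀ x y : S, IsArcIn ℓ A x y →
    Ts.ν (⇑F '' ℓ) (⇑F '' A) = (ENNReal.ofReal lam)⁻¹ * Ts.ν ℓ A
  unstable_expand : ∀ ℓ ∈ Tu.lines, ∀ A : Set S, ∀ x y : S, IsArcIn ℓ A x y →
    Tu.ν (⇑F '' ℓ) (⇑F '' A) = ENNReal.ofReal lam * Tu.ν ℓ A

/-- `x` is a (two-sided) density point of `D` along the streamline `ℓ` of `T`. -/
def DensityPtAlong {μ : Measure S} (T : MeasuredTurbulation μ) (ℓ D : Set S) (x : S) :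
    Prop :=
  ∀ ε : ℝ, 0 < ε → ∃ δ : ℝ, 0 < δ ∧ ∀ A : Set S, ∀ y : S,
    IsArcIn ℓ A x y → T.ν ℓ A < ENNReal.ofReal δ →
      (1 - ε) * (T.ν ℓ A).toReal ≤ (T.ν ℓ (A ∩ D)).toReal

/-- The set `den_k(R)` of level `k` density points of the tartan `R`. -/
def denSet {μ : Measure S} {Ts Tu : MeasuredTurbulation μ} (R : Tartan Ts Tu) :
    ℕ → Set S
  | 0 => R.core
  | k + 1 =>
    {x : S | x ∈ denSet R k ∧
      (∀ ℓ ∈ Ts.lines, x ∈ ℓ → DensityPtAlong Ts ℓ (denSet R k) x) ∧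
      (∀ ℓ ∈ Tu.lines, x ∈ ℓ → DensityPtAlong Tu ℓ (denSet R k) x)}

/-- The set `X_{δ,η}(R)`: points of `R^⋔` all of whose stable and unstable stream arcs of
measure less than `η` contain points of `R^⋔` in density at least `1 - δ`. -/
def Xset {μ : Measure S} {Ts Tu : MeasuredTurbulation μ} (R : Tartan Ts Tu)
    (δ η : ℝ) : Set S :=
  {x : S | x ∈ R.core ∧
    (∀ ℓ ∈ Ts.lines, x ∈ ℓ → ∀ A : Set S, ∀ y : S, IsArcIn ℓ A x y →
      Ts.ν ℓ A < ENNReal.ofReal η →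
        ENNReal.ofReal (1 - δ) * Ts.ν ℓ A ≤ Ts.ν ℓ (A ∩ R.core)) ∧
    (∀ ℓ ∈ Tu.lines, x ∈ ℓ → ∀ A : Set S, ∀ y : S, IsArcIn ℓ A x y →
      Tu.ν ℓ A < ENNReal.ofReal η →
        ENNReal.ofReal (1 - δ) * Tu.ν ℓ A ≤ Tu.ν ℓ (A ∩ R.core))}

/-- A regular tartan: for `y ∈ 𝔰(x) ∩ R^⋔` and `z ∈ 𝔲(x) ∩ R^⋔` at small stream distance
from `x`, all the fibers of the subtartan `R(y,z)` (the subarcs of stable fibers running from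
`𝔲(y)` to `𝔲(z) = 𝔲(x)`, and of unstable fibers running from `𝔰(y) = 𝔰(x)` to `𝔰(z)`)
are contained in `U`. -/
def Tartan.Regular {μ : Measure S} {Ts Tu : MeasuredTurbulation μ}
    (R : Tartan Ts Tu) : Prop :=
  ∀ x ∈ R.core, ∀ U ∈ 𝓝 x, ∃ δ : ℝ, 0 < δ ∧
    ∀ 𝔰x ∈ R.fibs, x ∈ 𝔰x → ∀ 𝔲x ∈ R.fibu, x ∈ 𝔲x →
    ∀ y ∈ 𝔰x ∩ R.core, ∀ z ∈ 𝔲x ∩ R.core,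
    (∀ ℓ ∈ Ts.lines, 𝔰x ⊆ ℓ → ∀ α : Set S, IsArcIn ℓ α x y →
      Ts.ν ℓ α < ENNReal.ofReal δ) →
    (∀ ℓ ∈ Tu.lines, 𝔲x ⊆ ℓ → ∀ α : Set S, IsArcIn ℓ α x z →
      Tu.ν ℓ α < ENNReal.ofReal δ) →
    ∀ 𝔲y ∈ R.fibu, y ∈ 𝔲y → ∀ 𝔰z ∈ R.fibs, z ∈ 𝔰z →
      ((∀ A ∈ R.fibs, ∀ p q : S, p ∈ A ∩ 𝔲y → q ∈ A ∩ 𝔲x →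
          ∀ ℓ ∈ Ts.lines, A ⊆ ℓ → ∀ α : Set S, IsArcIn ℓ α p q → α ⊆ U) ∧
       (∀ B ∈ R.fibu, ∀ p q : S, p ∈ B ∩ 𝔰x → q ∈ B ∩ 𝔰z →
          ∀ ℓ ∈ Tu.lines, B ⊆ ℓ → ∀ β : Set S, IsArcIn ℓ β p q → β ⊆ U))

/-- A (stable) bi-Lipschitz regular tartan: for some metric compatible with the topology of
`S` and some `K ≥ 1`, stream measure and distance are `K`-bi-Lipschitz comparable along
stable fibers. -/
def Tartan.StableBiLipschitzRegular {μ : Measure S} {Ts Tu : MeasuredTurbulation μ}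
    (R : Tartan Ts Tu) : Prop :=
  ∃ d : S → S → ℝ, IsCompatibleMetric S d ∧ ∃ K : ℝ, 1 ≤ K ∧
    ∀ 𝔰 ∈ R.fibs, ∀ x ∈ 𝔰, ∀ y ∈ 𝔰, ∀ ℓ ∈ Ts.lines, 𝔰 ⊆ ℓ →
      ∀ α : Set S, IsArcIn ℓ α x y →
        d x y / K ≤ (Ts.ν ℓ α).toReal ∧ (Ts.ν ℓ α).toReal ≤ K * d x y

/-- The turbulation `T` has partial flowboxes: if `x` and `y` lie on the same streamline
`ℓ`, and arcs transverse to `ℓ` at `x` and `y` contain transverse intersections with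
streamlines of `T` arbitrarily close to `x` and `y` on the same side of `ℓ`, then every
neighbourhood `U` of the stream arc `[x,y]` contains other stream arcs with endpoints on the
two transversals.  (The transversals and the side are encoded via a chart straightening the
streamline.) -/
def HasPartialFlowboxes {μ : Measure S} (T : MeasuredTurbulation μ) : Prop :=
  ∀ ℓ ∈ T.lines, ∀ x y : S, ∀ A : Set S, IsArcIn ℓ A x y →
  ∀ V : Set S, IsOpen V → ∀ e : V ≃ₜ ℝ × ℝ, A ⊆ V →
  (Subtype.val '' (⇑e ⁻¹' {p : ℝ × ℝ | p.2 = 0}) ⊆ ℓ) →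
  (∃ hx : x ∈ V, e ⟨x, hx⟩ = (0, 0)) →
  (∃ hy : y ∈ V, e ⟨y, hy⟩ = (1, 0)) →
  (∀ ε : ℝ, 0 < ε → ∃ p : S, ∃ hp : p ∈ V,
      (e ⟨p, hp⟩).1 = 0 ∧ 0 < (e ⟨p, hp⟩).2 ∧ (e ⟨p, hp⟩).2 < ε ∧
      ∃ ℓ' ∈ T.lines, p ∈ ℓ' ∧
        TransverseAt ℓ' (Subtype.val '' (⇑e ⁻¹' {q : ℝ × ℝ | q.1 = 0})) p) →
  (∀ ε : ℝ, 0 < ε → ∃ p : S, ∃ hp : p ∈ V,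
      (e ⟨p, hp⟩).1 = 1 ∧ 0 < (e ⟨p, hp⟩).2 ∧ (e ⟨p, hp⟩).2 < ε ∧
      ∃ ℓ' ∈ T.lines, p ∈ ℓ' ∧
        TransverseAt ℓ' (Subtype.val '' (⇑e ⁻¹' {q : ℝ × ℝ | q.1 = 1})) p) →
  ∀ U : Set S, IsOpen U → A ⊆ U →
    ∃ ℓ'' ∈ T.lines, ∃ A'' : Set S, ∃ x'' y'' : S, IsArcIn ℓ'' A'' x'' y'' ∧
      A'' ⊆ U ∧ A'' ≠ A ∧
      x'' ∈ Subtype.val '' (⇑e ⁻¹' {q : ℝ × ℝ | q.1 = 0}) ∧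
      y'' ∈ Subtype.val '' (⇑e ⁻¹' {q : ℝ × ℝ | q.1 = 1})

/-- Forward Birkhoff averages of `φ` under the homeomorphism `F`. -/
def birkhoffFwd (F : S ≃ₜ S) (φ : S → ℝ) (x : S) (n : ℕ) : ℝ :=
  (n : ℝ)⁻¹ * ∑ i ∈ Finset.range n, φ ((⇑F)^[i] x)

/-- Backward Birkhoff averages of `φ` under the homeomorphism `F`. -/
def birkhoffBwd (F : S ≃ₜ S) (φ : S → ℝ) (x : S) (n : ℕ) : ℝ :=
  (n : ℝ)⁻¹ * ∑ i ∈ Finset.range n, φ ((⇑F.symm)^[i] x)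

/-- The set `Z` of points where the forward and backward Birkhoff averages of `φ` exist
and are equal. -/
def ZSet (F : S ≃ₜ S) (φ : S → ℝ) : Set S :=
  {x : S | ∃ c : ℝ, Tendsto (birkhoffFwd F φ x) atTop (𝓝 c) ∧
      Tendsto (birkhoffBwd F φ x) atTop (𝓝 c)}

/-- The relation `~` on `Z`: `x ~ y` if they are joined by a finite chain of stream arcs
whose consecutive intersections contain points of `Z`. -/
def StreamRel {μ : Measure S} (Ts Tu : MeasuredTurbulation μ) (F : S ≃ₜ S)
    (φ : S → ℝ) (x y : S) : Prop :=
  x ∈ ZSet F φ ∧ y ∈ ZSet F φ ∧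
  (x = y ∨ ∃ k : ℕ, ∃ α : Fin (k + 1) → Set S,
    (∀ i, (∃ ℓ ∈ Ts.lines, IsArc ℓ (α i)) ∨ (∃ ℓ ∈ Tu.lines, IsArc ℓ (α i))) ∧
    x ∈ α 0 ∧ y ∈ α (Fin.last k) ∧
    ∀ i : Fin k, ∃ z ∈ α i.castSucc ∩ α i.succ, z ∈ ZSet F φ)



/-- A compact surface admits a metric compatible with its topology. -/
theorem exists_compatMetric (S : Type) [TopologicalSpace S] [T2Space S] [CompactSpace S]
    [ChartedSpace (EuclideanHalfSpace 2) S] :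
    ∃ d : S → S → ℝ, IsCompatibleMetric S d := by
  haveI : SecondCountableTopology (EuclideanHalfSpace 2) :=
    inferInstanceAs (SecondCountableTopology {x : EuclideanSpace ℝ (Fin 2) // 0 ≤ x 0})
  haveI : SecondCountableTopology S :=
    ChartedSpace.secondCountable_of_sigmaCompact (EuclideanHalfSpace 2) S
  letI m : MetricSpace S := TopologicalSpace.metrizableSpaceMetric S
  refine ⟨dist, dist_comm, fun x y => dist_eq_zero, dist_triangle, fun s => ?_⟩
  constructor
  · intro h x hx
    obtain ⟨ε, hε, hb⟩ := Metric.isOpen_iff.1 h x hx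
    exact ⟨ε, hε, fun y hy => hb (by rwa [Metric.mem_ball, dist_comm])⟩
  · intro h
    refine Metric.isOpen_iff.2 fun x hx => ?_
    obtain ⟨ε, hε, hb⟩ := h x hx
    exact ⟨ε, hε, fun y hy => hb y (by rwa [Metric.mem_ball, dist_comm] at hy)⟩

/-- Iterating a measurable pseudo-Anosov map on a stable stream arc: the image remains a
stream arc of a stable streamline, and its stream measure contracts by `lam⁻¹` each step. -/
theorem stable_iterate {μ : Measure S} {Ts Tu : MeasuredTurbulation μ} {F : S ≃ₜ S} {lam : ℝ}
    (hF : IsMPA μ F Ts Tu lam) {ℓ A : Set S} {x y : S}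
    (hℓ : ℓ ∈ Ts.lines) (hA : IsArcIn ℓ A x y) (n : ℕ) :
    (⇑F)^[n] '' ℓ ∈ Ts.lines ∧
      IsArcIn ((⇑F)^[n] '' ℓ) ((⇑F)^[n] '' A) ((⇑F)^[n] x) ((⇑F)^[n] y) ∧
      Ts.ν ((⇑F)^[n] '' ℓ) ((⇑F)^[n] '' A)
        = ((ENNReal.ofReal lam)⁻¹) ^ n * Ts.ν ℓ A := by
  induction n with
  | zero => simpa using ⟨hℓ, hA⟩
  | succ n ih =>
    obtain ⟨h1, h2, h3⟩ := ih
    have hcomp : ∀ s : Set S, (⇑F)^[n + 1] '' s = ⇑F '' ((⇑F)^[n] '' s) := fun s => by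
      rw [Function.iterate_succ']; exact Set.image_comp _ _ _
    have harc : IsArcIn (⇑F '' ((⇑F)^[n] '' ℓ)) (⇑F '' ((⇑F)^[n] '' A))
        (F ((⇑F)^[n] x)) (F ((⇑F)^[n] y)) := by
      obtain ⟨f, hfc, hfi, hfr, a, b, hab, hxa, hyb, hAe⟩ := h2
      refine ⟨⇑F ∘ f, F.continuous.comp hfc, F.injective.comp hfi, ?_, a, b, hab, ?_, ?_, ?_⟩
      · rw [Set.range_comp, hfr]
      · simp [hxa]
      · simp [hyb]
      · rw [hAe]; exact (Set.image_comp _ _ _).symm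
    refine ⟨?_, ?_, ?_⟩
    · rw [hcomp]; exact hF.stable_image _ h1
    · rw [hcomp, hcomp, Function.iterate_succ_apply', Function.iterate_succ_apply']
      exact harc
    · rw [hcomp, hcomp, hF.stable_contract _ h1 _ _ _ h2, h3, pow_succ]
      ring

/-- every measurable pseudo-Anosov homeomorphism is topologically
transitive. -/
theorem mpa_topologically_transitive
    {S : Type} [TopologicalSpace S] [T2Space S] [CompactSpace S]
    [ChartedSpace (EuclideanHalfSpace 2) S] [MeasurableSpace S] [BorelSpace S]
    (μ : Measure S) [IsProbabilityMeasure μ] (hμ : IsOUMeasure μ)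
    (Ts Tu : MeasuredTurbulation μ) (F : S ≃ₜ S) (lam : ℝ)
    (hF : IsMPA μ F Ts Tu lam) :
    ∀ U V : Set S, IsOpen U → U.Nonempty → IsOpen V → V.Nonempty →
      ∃ n : ℕ, 0 < n ∧ ((⇑F)^[n] '' U ∩ V).Nonempty := by
  intro U V hU hUne hV hVne
  classical
  obtain ⟨d, hsym, hzero, htri, hopen⟩ := exists_compatMetric S
  obtain ⟨v, hvV⟩ := hVne
  obtain ⟨ε, hε, hεV⟩ := (hopen V).1 hV v hvV
  have hBopen : IsOpen {y : S | d v y < ε / 2} := by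
    refine (hopen _).2 fun x hx => ?_
    simp only [Set.mem_setOf_eq] at hx
    refine ⟨ε / 2 - d v x, by linarith, fun y hy => ?_⟩
    have h3 := htri v x y
    simp only [Set.mem_setOf_eq]
    linarith
  have hBne : Set.Nonempty {y : S | d v y < ε / 2} := by
    refine ⟨v, ?_⟩
    simp only [Set.mem_setOf_eq, (hzero v v).2 rfl]
    linarith
  obtain ⟨hTrans, hTameS, hTameU, hFull, hDenseS, hDenseU⟩ := hF.turbulations
  obtain ⟨R, hRcomp, hRpos, hRsub⟩ := hFull.2 _ hBopen hBne
  have hcons : MeasureTheory.Conservative (⇑F) μ := hF.measurePreserving.conservative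
  have hmeas : MeasurableSet R.core := R.borel_s.inter R.borel_u
  have hpos : μ (R.core ∩ {x | ∃ᶠ n in atTop, (⇑F)^[n] x ∈ R.core}) ≠ 0 := by
    rw [hcons.measure_inter_frequently_image_mem_eq hmeas.nullMeasurableSet]
    exact hRpos.ne'
  obtain ⟨q, hqcore, hqfreq⟩ := MeasureTheory.nonempty_of_measure_ne_zero hpos
  have hqRs : q ∈ ⋃₀ R.fibs := by rw [R.fibs_cover]; exact hqcore.1
  obtain ⟨𝔰, h𝔰, hq𝔰⟩ := hqRs
  obtain ⟨ords, ordu, hsOrd, -, -, -⟩ := R.oriented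
  obtain ⟨ℓ, hℓ, f, hfc, hfi, hfr, a, b, hab, h𝔰eq, -⟩ := hsOrd 𝔰 h𝔰
  have hqrange : q ∈ Set.range f := by
    rw [h𝔰eq] at hq𝔰
    exact (Set.image_subset_range f _) hq𝔰
  obtain ⟨t₀, ht₀⟩ := hqrange
  have hdense : Dense ℓ := hDenseS ℓ hℓ
  obtain ⟨p, hpℓ, hpU⟩ := hdense.exists_mem_open hU hUne
  have hprange : p ∈ Set.range f := by rw [hfr]; exact hpℓ
  obtain ⟨s₀, hs₀⟩ := hprange
  obtain ⟨A, x, y, hAxy, hends⟩ :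
      ∃ A x y, IsArcIn ℓ A x y ∧ ((x = p ∧ y = q) ∨ (x = q ∧ y = p)) := by
    rcases le_total s₀ t₀ with h | h
    · exact ⟨f '' Set.Icc s₀ t₀, p, q,
        ⟨f, hfc, hfi, hfr, s₀, t₀, h, hs₀, ht₀, rfl⟩, Or.inl ⟨rfl, rfl⟩⟩
    · exact ⟨f '' Set.Icc t₀ s₀, q, p,
        ⟨f, hfc, hfi, hfr, t₀, s₀, h, ht₀, hs₀, rfl⟩, Or.inr ⟨rfl, rfl⟩⟩
  have hMfin : Ts.ν ℓ A < ⊤ := Ts.ν_arc_finite ℓ hℓ A x y hAxy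
  obtain ⟨δ, hδ, htame⟩ := hTameS d ⟨hsym, hzero, htri, hopen⟩ (ε / 2) (by linarith)
  have hr1 : (ENNReal.ofReal lam)⁻¹ < 1 :=
    ENNReal.inv_lt_one.mpr (ENNReal.one_lt_ofReal.mpr hF.one_lt_lam)
  have htend : Tendsto (fun n : ℕ => ((ENNReal.ofReal lam)⁻¹) ^ n * Ts.ν ℓ A) atTop (𝓝 0) := by
    have h0 := ENNReal.tendsto_pow_atTop_nhds_zero_of_lt_one hr1
    have h1 := ENNReal.Tendsto.mul_const h0 (Or.inr hMfin.ne)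
    simpa using h1
  have hev : ∀ᶠ n : ℕ in atTop,
      ((ENNReal.ofReal lam)⁻¹) ^ n * Ts.ν ℓ A < ENNReal.ofReal δ :=
    htend.eventually (gt_mem_nhds (ENNReal.ofReal_pos.mpr hδ))
  obtain ⟨n, hnq, hnlt, hn1⟩ :=
    (hqfreq.and_eventually (hev.and (eventually_ge_atTop 1))).exists
  obtain ⟨hl_n, ha_n, hm_n⟩ := stable_iterate hF hℓ hAxy n
  have hsmall : d ((⇑F)^[n] x) ((⇑F)^[n] y) < ε / 2 :=
    htame _ hl_n _ _ _ ha_n (by rw [hm_n]; exact hnlt)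
  have hdqp : d ((⇑F)^[n] q) ((⇑F)^[n] p) < ε / 2 := by
    rcases hends with ⟨rfl, rfl⟩ | ⟨rfl, rfl⟩
    · rw [hsym]; exact hsmall
    · exact hsmall
  have hqB : d v ((⇑F)^[n] q) < ε / 2 := hRsub (Set.mem_union_left _ hnq.1)
  refine ⟨n, hn1, (⇑F)^[n] p, Set.mem_image_of_mem _ hpU, ?_⟩
  exact hεV _ (lt_of_le_of_lt (htri v ((⇑F)^[n] q) ((⇑F)^[n] p)) (by linarith))


end
end

section
/- Holonomy invariance: let R be a compatible positive measure tartan, let 𝔰 and 𝔰' be stable fibers of R, and let B ⊆ E^𝔰 be ν_𝔰-measurable. Then B' = h_{𝔰,𝔰'}(B) is ν_{𝔰'}-measurable and ν_{𝔰'}(B') = ν_𝔰(B), where the holonomy map h_{𝔰,𝔰'} : E^𝔰 → E^{𝔰'} is defined by h_{𝔰,𝔰'}(x) = 𝔲(x)⋔𝔰'. The analogous statement holds for the holonomy maps h_{𝔲,𝔲'}(y) = 𝔰(y)⋔𝔲' between unstable fibers. -/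
open MeasureTheory Set Function Topology Filter
open scoped ENNReal

noncomputable section

variable {S : Type} [TopologicalSpace S] [MeasurableSpace S]

open scoped symmDiff in
private lemma hol_key {S : Type} [MeasurableSpace S]
    (core : Set S) (F G : Set (Set S))
    (hsub : ∀ A ∈ F, ∀ B ∈ G, A ∩ B ⊆ core)
    (hcovF : ∀ y ∈ core, ∃ A ∈ F, y ∈ A)
    (hcovG : ∀ x ∈ core, ∃ B ∈ G, x ∈ B)
    (huniq : ∀ A ∈ F, ∀ B ∈ G, ∃! z : S, z ∈ A ∩ B)
    (𝔰 𝔰' 𝔲 : Set S) (h𝔰' : 𝔰' ∈ F)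
    (m m' mu : Measure S)
    (hmfin : IsFiniteMeasure m) (hm'fin : IsFiniteMeasure m') (hmufin : IsFiniteMeasure mu)
    (hmE : MeasurableSet (𝔰 ∩ core)) (hmE' : MeasurableSet (𝔰' ∩ core))
    (hmEu : MeasurableSet (𝔲 ∩ core))
    (hm0 : m (𝔰 ∩ core)ᶜ = 0) (hm'0 : m' (𝔰' ∩ core)ᶜ = 0) (hmu0 : mu (𝔲 ∩ core)ᶜ = 0)
    (hmupos : mu (𝔲 ∩ core) ≠ 0)
    (ψ ψ' : S × S → S)
    (hψmem : ∀ x ∈ 𝔰 ∩ core, ∀ y ∈ 𝔲 ∩ core, ∀ B ∈ G, x ∈ B → ∀ A ∈ F, y ∈ A →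
      ψ (x, y) ∈ B ∩ A)
    (hψ'mem : ∀ x ∈ 𝔰' ∩ core, ∀ y ∈ 𝔲 ∩ core, ∀ B ∈ G, x ∈ B → ∀ A ∈ F, y ∈ A →
      ψ' (x, y) ∈ B ∩ A)
    (hinj : Set.InjOn ψ ((𝔰 ∩ core) ×ˢ (𝔲 ∩ core)))
    (hinj' : Set.InjOn ψ' ((𝔰' ∩ core) ×ˢ (𝔲 ∩ core)))
    (hmeas : Measurable ψ) (hmeas' : Measurable ψ')
    (himg : ∀ E : Set (S × S), E ⊆ (𝔰 ∩ core) ×ˢ (𝔲 ∩ core) → MeasurableSet E →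
      MeasurableSet (ψ '' E))
    (hmaps : Measure.map ψ (m.prod mu) = Measure.map ψ' (m'.prod mu))
    (B : Set S) (hB : B ⊆ 𝔰 ∩ core) (hBnm : NullMeasurableSet B m) :
    NullMeasurableSet {x' : S | ∃ x ∈ B, ∃ Bu ∈ G, x ∈ Bu ∧ x' ∈ Bu ∩ 𝔰'} m' ∧
    m' {x' : S | ∃ x ∈ B, ∃ Bu ∈ G, x ∈ Bu ∧ x' ∈ Bu ∩ 𝔰'} = m B := by
  haveI := hmfin; haveI := hm'fin; haveI := hmufin
  set E : Set S := 𝔰 ∩ core with hEdef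
  set E' : Set S := 𝔰' ∩ core with hE'def
  set Eu : Set S := 𝔲 ∩ core with hEudef
  let hol : Set S → Set S := fun A => {x' : S | ∃ x ∈ A, ∃ Bu ∈ G, x ∈ Bu ∧ x' ∈ Bu ∩ 𝔰'}
  show NullMeasurableSet (hol B) m' ∧ m' (hol B) = m B
  -- basic properties of hol
  have holmono : ∀ A C : Set S, A ⊆ C → hol A ⊆ hol C := by
    rintro A C hAC z ⟨x, hx, Bu, hBu, hxBu, hz⟩
    exact ⟨x, hAC hx, Bu, hBu, hxBu, hz⟩
  have holdiff : ∀ A C : Set S, hol A \ hol C ⊆ hol (A \ C) := by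
    rintro A C z ⟨⟨x, hx, Bu, hBu, hxBu, hz⟩, hzn⟩
    refine ⟨x, ⟨hx, fun hxC => hzn ⟨x, hxC, Bu, hBu, hxBu, hz⟩⟩, Bu, hBu, hxBu, hz⟩
  have holsub : ∀ A : Set S, hol A ⊆ E' := by
    rintro A z ⟨x, hx, Bu, hBu, hxBu, hz⟩
    exact ⟨hz.2, hsub 𝔰' h𝔰' Bu hBu ⟨hz.2, hz.1⟩⟩
  -- step 1 : pointwise identity
  have key1 : ∀ x ∈ E, ∀ y ∈ Eu, ∀ Bu ∈ G, x ∈ Bu → ∀ z, z ∈ Bu ∩ 𝔰' →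
      ψ' (z, y) = ψ (x, y) := by
    intro x hx y hy Bu hBu hxBu z hz
    have hz' : z ∈ E' := ⟨hz.2, hsub 𝔰' h𝔰' Bu hBu ⟨hz.2, hz.1⟩⟩
    obtain ⟨A, hA, hyA⟩ := hcovF y hy.2
    have h1 := hψ'mem z hz' y hy Bu hBu hz.1 A hA hyA
    have h2 := hψmem x hx y hy Bu hBu hxBu A hA hyA
    obtain ⟨w, -, hwu⟩ := huniq A hA Bu hBu
    rw [hwu _ ⟨h1.2, h1.1⟩, hwu _ ⟨h2.2, h2.1⟩]
  -- step 3 : image identity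
  have imgeq : ∀ A : Set S, A ⊆ E → ψ '' (A ×ˢ Eu) = ψ' '' (hol A ×ˢ Eu) := by
    intro A hAE
    ext w
    constructor
    · rintro ⟨⟨x, y⟩, ⟨hx, hy⟩, rfl⟩
      obtain ⟨Bu, hBu, hxBu⟩ := hcovG x (hAE hx).2
      obtain ⟨z, hz, -⟩ := huniq 𝔰' h𝔰' Bu hBu
      have hz' : z ∈ Bu ∩ 𝔰' := ⟨hz.2, hz.1⟩
      exact ⟨(z, y), ⟨⟨x, hx, Bu, hBu, hxBu, hz'⟩, hy⟩,
        key1 x (hAE hx) y hy Bu hBu hxBu z hz'⟩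
    · rintro ⟨⟨z, y⟩, ⟨⟨x, hx, Bu, hBu, hxBu, hz⟩, hy⟩, rfl⟩
      exact ⟨(x, y), ⟨hx, hy⟩, (key1 x (hAE hx) y hy Bu hBu hxBu z hz).symm⟩
  -- step 4 : measure of images
  have step4 : ∀ (a : Measure S), IsFiniteMeasure a → ∀ E₁ : Set S, a E₁ᶜ = 0 →
      ∀ ψ₀ : S × S → S, Set.InjOn ψ₀ (E₁ ×ˢ Eu) → Measurable ψ₀ →
      ∀ M : Set S, M ⊆ E₁ → MeasurableSet (ψ₀ '' (M ×ˢ Eu)) →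
      Measure.map ψ₀ (a.prod mu) (ψ₀ '' (M ×ˢ Eu)) = a M * mu Eu := by
    intro a hafin E₁ ha0 ψ₀ hinj₀ hmeas₀ M hME hTm
    haveI := hafin
    rw [Measure.map_apply hmeas₀ hTm]
    have hcompl : (a.prod mu) ((E₁ ×ˢ Eu)ᶜ) = 0 := by
      have hss : (E₁ ×ˢ Eu)ᶜ ⊆ (E₁ᶜ ×ˢ (univ : Set S)) ∪ ((univ : Set S) ×ˢ Euᶜ) := by
        rintro ⟨x, y⟩ h
        by_cases hx : x ∈ E₁
        · exact Or.inr ⟨trivial, fun hy => h ⟨hx, hy⟩⟩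
        · exact Or.inl ⟨hx, trivial⟩
      refine le_antisymm ((measure_mono hss).trans ?_) (zero_le)
      refine (measure_union_le _ _).trans ?_
      rw [Measure.prod_prod, Measure.prod_prod, ha0, hmu0, zero_mul, mul_zero, add_zero]
    have hsplit : (a.prod mu) (ψ₀ ⁻¹' (ψ₀ '' (M ×ˢ Eu)))
        = (a.prod mu) (ψ₀ ⁻¹' (ψ₀ '' (M ×ˢ Eu)) ∩ (E₁ ×ˢ Eu)) := by
      refine le_antisymm ?_ (measure_mono inter_subset_left)
      calc (a.prod mu) (ψ₀ ⁻¹' (ψ₀ '' (M ×ˢ Eu)))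
          ≤ (a.prod mu) (ψ₀ ⁻¹' (ψ₀ '' (M ×ˢ Eu)) ∩ (E₁ ×ˢ Eu))
            + (a.prod mu) (ψ₀ ⁻¹' (ψ₀ '' (M ×ˢ Eu)) \ (E₁ ×ˢ Eu)) :=
            measure_le_inter_add_diff _ _ _
        _ ≤ (a.prod mu) (ψ₀ ⁻¹' (ψ₀ '' (M ×ˢ Eu)) ∩ (E₁ ×ˢ Eu)) + 0 := by
            gcongr
            exact le_trans (measure_mono (diff_subset_compl _ _)) hcompl.le
        _ = _ := add_zero _
    have hident : ψ₀ ⁻¹' (ψ₀ '' (M ×ˢ Eu)) ∩ (E₁ ×ˢ Eu) = M ×ˢ Eu := by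
      apply Set.Subset.antisymm
      · rintro p ⟨hp1, hp2⟩
        obtain ⟨q, hq, hqe⟩ := hp1
        obtain ⟨hq1, hq2⟩ := hq
        have hqr : q ∈ E₁ ×ˢ Eu := ⟨hME hq1, hq2⟩
        have : p = q := (hinj₀ hp2 hqr hqe.symm)
        rw [this]; exact ⟨hq1, hq2⟩
      · intro p hp
        exact ⟨Set.mem_image_of_mem _ hp, ⟨hME hp.1, hp.2⟩⟩
    rw [hsplit, hident, Measure.prod_prod]
  -- Eu nonempty
  have Eu_ne : Eu.Nonempty := by
    rcases Set.eq_empty_or_nonempty Eu with h | h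
    · exact absurd (by rw [h]; exact measure_empty) hmupos
    · exact h
  obtain ⟨y₀, hy₀⟩ := Eu_ne
  -- step 5 : hol M measurable
  have step5 : ∀ M : Set S, M ⊆ E → MeasurableSet M → MeasurableSet (hol M) := by
    intro M hME hMm
    have hTm : MeasurableSet (ψ '' (M ×ˢ Eu)) :=
      himg _ (Set.prod_mono hME Subset.rfl) (hMm.prod hmEu)
    have heq : hol M ×ˢ Eu = ψ' ⁻¹' (ψ '' (M ×ˢ Eu)) ∩ (E' ×ˢ Eu) := by
      rw [imgeq M hME]
      apply Set.Subset.antisymm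
      · rintro p ⟨hp1, hp2⟩
        exact ⟨Set.mem_image_of_mem _ ⟨hp1, hp2⟩, ⟨holsub M hp1, hp2⟩⟩
      · rintro p ⟨hp1, hp2⟩
        obtain ⟨q, hq, hqe⟩ := hp1
        obtain ⟨hq1, hq2⟩ := hq
        have hqr : q ∈ E' ×ˢ Eu := ⟨holsub M hq1, hq2⟩
        have : p = q := hinj' hp2 hqr hqe.symm
        rw [this]; exact ⟨hq1, hq2⟩
    have hpm : MeasurableSet (hol M ×ˢ Eu) := by
      rw [heq]; exact (hTm.preimage hmeas').inter (hmE'.prod hmEu)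
    have hsec : hol M = (fun x => (x, y₀)) ⁻¹' (hol M ×ˢ Eu) := by
      ext x
      constructor
      · intro hx; exact ⟨hx, hy₀⟩
      · intro hx; exact hx.1
    rw [hsec]
    exact hpm.preimage (measurable_id.prodMk measurable_const)
  -- step 6 : measure of hol M
  have step6 : ∀ M : Set S, M ⊆ E → MeasurableSet M → m' (hol M) = m M := by
    intro M hME hMm
    have hTm : MeasurableSet (ψ '' (M ×ˢ Eu)) :=
      himg _ (Set.prod_mono hME Subset.rfl) (hMm.prod hmEu)
    have h1 := step4 m hmfin E hm0 ψ hinj hmeas M hME hTm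
    have hT'm : MeasurableSet (ψ' '' (hol M ×ˢ Eu)) := by rw [← imgeq M hME]; exact hTm
    have h2 := step4 m' hm'fin E' hm'0 ψ' hinj' hmeas' (hol M) (holsub M) hT'm
    rw [← hmaps, ← imgeq M hME] at h2
    have h3 : m M * mu Eu = m' (hol M) * mu Eu := h1.symm.trans h2
    exact ((ENNReal.mul_left_inj hmupos (measure_ne_top mu Eu)).mp h3).symm
  -- step 7 : null sets
  have step7 : ∀ N : Set S, N ⊆ E → m N = 0 → m' (hol N) = 0 := by
    intro N hNE hN0
    set Nb := toMeasurable m N ∩ E with hNbdef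
    have hNbm : MeasurableSet Nb := (measurableSet_toMeasurable m N).inter hmE
    have hNNb : N ⊆ Nb := subset_inter (subset_toMeasurable m N) hNE
    have hNb0 : m Nb = 0 := le_antisymm
      (le_trans (measure_mono inter_subset_left) (by rw [measure_toMeasurable, hN0]))
      (zero_le)
    have h6 := step6 Nb inter_subset_right hNbm
    rw [hNb0] at h6
    exact le_antisymm (h6 ▸ measure_mono (holmono N Nb hNNb)) (zero_le)
  -- step 8 : assemble
  have htae : toMeasurable m B =ᵐ[m] B := NullMeasurableSet.toMeasurable_ae_eq hBnm
  set M := toMeasurable m B ∩ E with hMdef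
  have hMm : MeasurableSet M := (measurableSet_toMeasurable m B).inter hmE
  have hsymm0 : m (B ∆ toMeasurable m B) = 0 :=
    measure_symmDiff_eq_zero_iff.mpr htae.symm
  have hsymm : m (B ∆ M) = 0 := by
    refine le_antisymm (le_trans (measure_mono ?_) hsymm0.le) (zero_le)
    intro x hx
    rcases Set.mem_symmDiff.mp hx with ⟨hx1, hx2⟩ | ⟨hx1, hx2⟩
    · exact Set.mem_symmDiff.mpr (Or.inl ⟨hx1, fun h => hx2 ⟨h, hB hx1⟩⟩)
    · exact Set.mem_symmDiff.mpr (Or.inr ⟨hx1.1, hx2⟩)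
  have hBM : B =ᵐ[m] M := measure_symmDiff_eq_zero_iff.mp hsymm
  have hBMsub : B ∆ M ⊆ E := by
    intro x hx
    rcases Set.mem_symmDiff.mp hx with ⟨hx1, -⟩ | ⟨hx1, -⟩
    · exact hB hx1
    · exact hx1.2
  have hholsym : hol B ∆ hol M ⊆ hol (B ∆ M) := by
    intro z hz
    rcases Set.mem_symmDiff.mp hz with ⟨hz1, hz2⟩ | ⟨hz1, hz2⟩
    · exact holmono _ _ (by intro x hx; exact Set.mem_symmDiff.mpr (Or.inl hx))
        (holdiff B M ⟨hz1, hz2⟩)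
    · exact holmono _ _ (by intro x hx; exact Set.mem_symmDiff.mpr (Or.inr hx))
        (holdiff M B ⟨hz1, hz2⟩)
  have hhol0 : m' (hol B ∆ hol M) = 0 :=
    le_antisymm (le_trans (measure_mono hholsym) (step7 _ hBMsub hsymm).le) (zero_le)
  have hae' : hol B =ᵐ[m'] hol M := measure_symmDiff_eq_zero_iff.mp hhol0
  refine ⟨((step5 M inter_subset_right hMm).nullMeasurableSet).congr hae'.symm, ?_⟩
  calc m' (hol B) = m' (hol M) := measure_congr hae'
    _ = m M := step6 M inter_subset_right hMm
    _ = m B := (measure_congr hBM).symm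

/-- holonomy invariance for compatible positive measure tartans. -/
theorem tartan_holonomy_invariance
    {S : Type} [TopologicalSpace S] [T2Space S] [CompactSpace S]
    [ChartedSpace (EuclideanHalfSpace 2) S] [MeasurableSpace S] [BorelSpace S]
    (μ : Measure S) [IsProbabilityMeasure μ] (hμ : IsOUMeasure μ)
    (Ts Tu : MeasuredTurbulation μ) (htrans : Ts.TransversePair Tu)
    (R : Tartan Ts Tu) (hcomp : R.Compatible) (hpos : 0 < μ R.core) :
    (∀ 𝔰 ∈ R.fibs, ∀ 𝔰' ∈ R.fibs,
      ∀ ℓ ∈ Ts.lines, 𝔰 ⊆ ℓ → ∀ ℓ' ∈ Ts.lines, 𝔰' ⊆ ℓ' →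
      ∀ B : Set S, B ⊆ 𝔰 ∩ R.core →
        NullMeasurableSet B ((Ts.ν ℓ).restrict (𝔰 ∩ R.core)) →
        NullMeasurableSet (R.holSS 𝔰' B) ((Ts.ν ℓ').restrict (𝔰' ∩ R.core)) ∧
        (Ts.ν ℓ').restrict (𝔰' ∩ R.core) (R.holSS 𝔰' B)
          = (Ts.ν ℓ).restrict (𝔰 ∩ R.core) B) ∧
    (∀ 𝔲 ∈ R.fibu, ∀ 𝔲' ∈ R.fibu,
      ∀ ℓ ∈ Tu.lines, 𝔲 ⊆ ℓ → ∀ ℓ' ∈ Tu.lines, 𝔲' ⊆ ℓ' →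
      ∀ B : Set S, B ⊆ 𝔲 ∩ R.core →
        NullMeasurableSet B ((Tu.ν ℓ).restrict (𝔲 ∩ R.core)) →
        NullMeasurableSet (R.holUU 𝔲' B) ((Tu.ν ℓ').restrict (𝔲' ∩ R.core)) ∧
        (Tu.ν ℓ').restrict (𝔲' ∩ R.core) (R.holUU 𝔲' B)
          = (Tu.ν ℓ).restrict (𝔲 ∩ R.core) B) := by
  obtain ⟨ords, ordu, hos, hou, -, -⟩ := R.oriented
  have hcoreM : MeasurableSet R.core := R.borel_s.inter R.borel_u
  have hsubS : ∀ A ∈ R.fibs, A ⊆ R.Rs := fun A hA => R.fibs_cover ▸ Set.subset_sUnion_of_mem hA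
  have hsubU : ∀ B ∈ R.fibu, B ⊆ R.Ru := fun B hB => R.fibu_cover ▸ Set.subset_sUnion_of_mem hB
  have hcovS : ∀ y ∈ R.core, ∃ A ∈ R.fibs, y ∈ A := by
    intro y hy
    have h1 : y ∈ ⋃₀ R.fibs := by rw [R.fibs_cover]; exact hy.1
    exact Set.mem_sUnion.mp h1
  have hcovU : ∀ y ∈ R.core, ∃ A ∈ R.fibu, y ∈ A := by
    intro y hy
    have h1 : y ∈ ⋃₀ R.fibu := by rw [R.fibu_cover]; exact hy.2
    exact Set.mem_sUnion.mp h1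
  have hsubSU : ∀ A ∈ R.fibs, ∀ B ∈ R.fibu, A ∩ B ⊆ R.core :=
    fun A hA B hB z hz => ⟨hsubS A hA hz.1, hsubU B hB hz.2⟩
  have hsubUS : ∀ B ∈ R.fibu, ∀ A ∈ R.fibs, B ∩ A ⊆ R.core :=
    fun B hB A hA z hz => ⟨hsubS A hA hz.2, hsubU B hB hz.1⟩
  have factS : ∀ A ∈ R.fibs, ∀ ℓ ∈ Ts.lines, A ⊆ ℓ →
      MeasurableSet (A ∩ R.core) ∧ Ts.ν ℓ A ≠ ⊤ := by
    intro A hA ℓ hℓ hAℓ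
    obtain ⟨ℓ₀, hℓ₀, f, hf, hfinj, hfr, a, b, hab, hAeq, -⟩ := hos A hA
    have hfa : f a ∈ A := by rw [hAeq]; exact ⟨a, ⟨le_refl a, hab⟩, rfl⟩
    have hmeasA : MeasurableSet A := by
      rw [hAeq]; exact (isCompact_Icc.image hf).isClosed.measurableSet
    have hℓeq : ℓ = ℓ₀ := by
      by_contra hne
      exact Set.disjoint_left.mp (Ts.lines_disjoint hℓ hℓ₀ hne) (hAℓ hfa)
        (show f a ∈ ℓ₀ by rw [← hfr]; exact Set.mem_range_self a)
    have harc : IsArcIn ℓ A (f a) (f b) :=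
      ⟨f, hf, hfinj, by rw [hℓeq]; exact hfr, a, b, hab, rfl, rfl, hAeq⟩
    exact ⟨hmeasA.inter hcoreM, (Ts.ν_arc_finite ℓ hℓ A (f a) (f b) harc).ne⟩
  have factU : ∀ A ∈ R.fibu, ∀ ℓ ∈ Tu.lines, A ⊆ ℓ →
      MeasurableSet (A ∩ R.core) ∧ Tu.ν ℓ A ≠ ⊤ := by
    intro A hA ℓ hℓ hAℓ
    obtain ⟨ℓ₀, hℓ₀, f, hf, hfinj, hfr, a, b, hab, hAeq, -⟩ := hou A hA
    have hfa : f a ∈ A := by rw [hAeq]; exact ⟨a, ⟨le_refl a, hab⟩, rfl⟩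
    have hmeasA : MeasurableSet A := by
      rw [hAeq]; exact (isCompact_Icc.image hf).isClosed.measurableSet
    have hℓeq : ℓ = ℓ₀ := by
      by_contra hne
      exact Set.disjoint_left.mp (Tu.lines_disjoint hℓ hℓ₀ hne) (hAℓ hfa)
        (show f a ∈ ℓ₀ by rw [← hfr]; exact Set.mem_range_self a)
    have harc : IsArcIn ℓ A (f a) (f b) :=
      ⟨f, hf, hfinj, by rw [hℓeq]; exact hfr, a, b, hab, rfl, rfl, hAeq⟩
    exact ⟨hmeasA.inter hcoreM, (Tu.ν_arc_finite ℓ hℓ A (f a) (f b) harc).ne⟩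
  have lineS : ∀ A ∈ R.fibs, ∃ ℓ ∈ Ts.lines, A ⊆ ℓ := by
    intro A hA
    obtain ⟨ℓ₀, hℓ₀, f, hf, -, hfr, a, b, -, hAeq, -⟩ := hos A hA
    exact ⟨ℓ₀, hℓ₀, by rw [hAeq, ← hfr]; exact Set.image_subset_range f _⟩
  have lineU : ∀ A ∈ R.fibu, ∃ ℓ ∈ Tu.lines, A ⊆ ℓ := by
    intro A hA
    obtain ⟨ℓ₀, hℓ₀, f, hf, -, hfr, a, b, -, hAeq, -⟩ := hou A hA
    exact ⟨ℓ₀, hℓ₀, by rw [hAeq, ← hfr]; exact Set.image_subset_range f _⟩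
  have posfac : ∀ a b : Measure S, IsFiniteMeasure a → IsFiniteMeasure b →
      ∀ ψ₀ : S × S → S, Measurable ψ₀ →
      Measure.map ψ₀ (a.prod b) = μ.restrict R.core →
      a Set.univ ≠ 0 ∧ b Set.univ ≠ 0 := by
    intro a b ha hb ψ₀ hψ₀ hmap
    haveI := ha; haveI := hb
    have h1 : μ R.core ≤ a Set.univ * b Set.univ := by
      have h2 : μ.restrict R.core Set.univ = (a.prod b) (ψ₀ ⁻¹' Set.univ) := by
        rw [← hmap, Measure.map_apply hψ₀ MeasurableSet.univ]
      rw [Measure.restrict_apply_univ] at h2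
      rw [h2, Set.preimage_univ, ← Set.univ_prod_univ, Measure.prod_prod]
    constructor
    · intro h; rw [h, zero_mul] at h1
      exact absurd (le_antisymm h1 (zero_le)) hpos.ne'
    · intro h; rw [h, mul_zero] at h1
      exact absurd (le_antisymm h1 (zero_le)) hpos.ne'
  obtain ⟨x₀, hx₀⟩ := nonempty_of_measure_ne_zero hpos.ne'
  constructor
  · -- stable holonomy
    intro 𝔰 h𝔰 𝔰' h𝔰' ℓ hℓ h𝔰ℓ ℓ' hℓ' h𝔰'ℓ' B hBsub hBnm
    obtain ⟨𝔲₀, h𝔲₀, -⟩ := hcovU x₀ hx₀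
    obtain ⟨ℓu, hℓu, h𝔲ℓu⟩ := lineU 𝔲₀ h𝔲₀
    obtain ⟨hmE, hνfin⟩ := factS 𝔰 h𝔰 ℓ hℓ h𝔰ℓ
    obtain ⟨hmE', hνfin'⟩ := factS 𝔰' h𝔰' ℓ' hℓ' h𝔰'ℓ'
    obtain ⟨hmEu, hνufin⟩ := factU 𝔲₀ h𝔲₀ ℓu hℓu h𝔲ℓu
    obtain ⟨ψ, hψmem, hψinj, hψim, hψmeas, hψimg, hψmap⟩ :=
      hcomp 𝔰 h𝔰 𝔲₀ h𝔲₀ ℓ hℓ h𝔰ℓ ℓu hℓu h𝔲ℓu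
    obtain ⟨ψ', hψ'mem, hψ'inj, hψ'im, hψ'meas, hψ'img, hψ'map⟩ :=
      hcomp 𝔰' h𝔰' 𝔲₀ h𝔲₀ ℓ' hℓ' h𝔰'ℓ' ℓu hℓu h𝔲ℓu
    have hfm : IsFiniteMeasure ((Ts.ν ℓ).restrict (𝔰 ∩ R.core)) := ⟨by
      rw [Measure.restrict_apply_univ]
      exact lt_of_le_of_lt (measure_mono Set.inter_subset_left) hνfin.lt_top⟩
    have hfm' : IsFiniteMeasure ((Ts.ν ℓ').restrict (𝔰' ∩ R.core)) := ⟨by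
      rw [Measure.restrict_apply_univ]
      exact lt_of_le_of_lt (measure_mono Set.inter_subset_left) hνfin'.lt_top⟩
    have hfmu : IsFiniteMeasure ((Tu.ν ℓu).restrict (𝔲₀ ∩ R.core)) := ⟨by
      rw [Measure.restrict_apply_univ]
      exact lt_of_le_of_lt (measure_mono Set.inter_subset_left) hνufin.lt_top⟩
    have hm0 : (Ts.ν ℓ).restrict (𝔰 ∩ R.core) (𝔰 ∩ R.core)ᶜ = 0 := by
      rw [Measure.restrict_apply hmE.compl, Set.compl_inter_self]; exact measure_empty
    have hm'0 : (Ts.ν ℓ').restrict (𝔰' ∩ R.core) (𝔰' ∩ R.core)ᶜ = 0 := by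
      rw [Measure.restrict_apply hmE'.compl, Set.compl_inter_self]; exact measure_empty
    have hmu0 : (Tu.ν ℓu).restrict (𝔲₀ ∩ R.core) (𝔲₀ ∩ R.core)ᶜ = 0 := by
      rw [Measure.restrict_apply hmEu.compl, Set.compl_inter_self]; exact measure_empty
    have hmupos : (Tu.ν ℓu).restrict (𝔲₀ ∩ R.core) (𝔲₀ ∩ R.core) ≠ 0 := by
      have heq : (Tu.ν ℓu).restrict (𝔲₀ ∩ R.core) (𝔲₀ ∩ R.core)
          = (Tu.ν ℓu).restrict (𝔲₀ ∩ R.core) Set.univ := by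
        rw [Measure.restrict_apply' hmEu, Set.inter_self, Measure.restrict_apply_univ]
      rw [heq]
      exact (posfac _ _ hfm hfmu ψ hψmeas hψmap).2
    exact hol_key R.core R.fibs R.fibu hsubSU hcovS hcovU R.inter_unique 𝔰 𝔰' 𝔲₀ h𝔰'
      ((Ts.ν ℓ).restrict (𝔰 ∩ R.core)) ((Ts.ν ℓ').restrict (𝔰' ∩ R.core))
      ((Tu.ν ℓu).restrict (𝔲₀ ∩ R.core)) hfm hfm' hfmu hmE hmE' hmEu hm0 hm'0 hmu0
      hmupos ψ ψ' hψmem hψ'mem hψinj hψ'inj hψmeas hψ'meas hψimg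
      (hψmap.trans hψ'map.symm) B hBsub hBnm
  · -- unstable holonomy
    intro 𝔲 h𝔲 𝔲' h𝔲' ℓ hℓ h𝔲ℓ ℓ' hℓ' h𝔲'ℓ' B hBsub hBnm
    obtain ⟨𝔰₀, h𝔰₀, -⟩ := hcovS x₀ hx₀
    obtain ⟨ℓs, hℓs, h𝔰ℓs⟩ := lineS 𝔰₀ h𝔰₀
    obtain ⟨hmE, hνfin⟩ := factU 𝔲 h𝔲 ℓ hℓ h𝔲ℓ
    obtain ⟨hmE', hνfin'⟩ := factU 𝔲' h𝔲' ℓ' hℓ' h𝔲'ℓ'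
    obtain ⟨hmEu, hνufin⟩ := factS 𝔰₀ h𝔰₀ ℓs hℓs h𝔰ℓs
    obtain ⟨ψ, hψmem, hψinj, hψim, hψmeas, hψimg, hψmap⟩ :=
      hcomp 𝔰₀ h𝔰₀ 𝔲 h𝔲 ℓs hℓs h𝔰ℓs ℓ hℓ h𝔲ℓ
    obtain ⟨ψ', hψ'mem, hψ'inj, hψ'im, hψ'meas, hψ'img, hψ'map⟩ :=
      hcomp 𝔰₀ h𝔰₀ 𝔲' h𝔲' ℓs hℓs h𝔰ℓs ℓ' hℓ' h𝔲'ℓ'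
    have hfm : IsFiniteMeasure ((Tu.ν ℓ).restrict (𝔲 ∩ R.core)) := ⟨by
      rw [Measure.restrict_apply_univ]
      exact lt_of_le_of_lt (measure_mono Set.inter_subset_left) hνfin.lt_top⟩
    have hfm' : IsFiniteMeasure ((Tu.ν ℓ').restrict (𝔲' ∩ R.core)) := ⟨by
      rw [Measure.restrict_apply_univ]
      exact lt_of_le_of_lt (measure_mono Set.inter_subset_left) hνfin'.lt_top⟩
    have hfmu : IsFiniteMeasure ((Ts.ν ℓs).restrict (𝔰₀ ∩ R.core)) := ⟨by
      rw [Measure.restrict_apply_univ]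
      exact lt_of_le_of_lt (measure_mono Set.inter_subset_left) hνufin.lt_top⟩
    haveI := hfm; haveI := hfm'; haveI := hfmu
    have hm0 : (Tu.ν ℓ).restrict (𝔲 ∩ R.core) (𝔲 ∩ R.core)ᶜ = 0 := by
      rw [Measure.restrict_apply hmE.compl, Set.compl_inter_self]; exact measure_empty
    have hm'0 : (Tu.ν ℓ').restrict (𝔲' ∩ R.core) (𝔲' ∩ R.core)ᶜ = 0 := by
      rw [Measure.restrict_apply hmE'.compl, Set.compl_inter_self]; exact measure_empty
    have hmu0 : (Ts.ν ℓs).restrict (𝔰₀ ∩ R.core) (𝔰₀ ∩ R.core)ᶜ = 0 := by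
      rw [Measure.restrict_apply hmEu.compl, Set.compl_inter_self]; exact measure_empty
    have hmupos : (Ts.ν ℓs).restrict (𝔰₀ ∩ R.core) (𝔰₀ ∩ R.core) ≠ 0 := by
      have heq : (Ts.ν ℓs).restrict (𝔰₀ ∩ R.core) (𝔰₀ ∩ R.core)
          = (Ts.ν ℓs).restrict (𝔰₀ ∩ R.core) Set.univ := by
        rw [Measure.restrict_apply' hmEu, Set.inter_self, Measure.restrict_apply_univ]
      rw [heq]
      exact (posfac _ _ hfmu hfm ψ hψmeas hψmap).1
    -- swapped maps
    set ψs : S × S → S := ψ ∘ Prod.swap with hψsdef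
    set ψs' : S × S → S := ψ' ∘ Prod.swap with hψs'def
    have huniq' : ∀ A ∈ R.fibu, ∀ C ∈ R.fibs, ∃! z : S, z ∈ A ∩ C := by
      intro A hA C hC
      obtain ⟨z, hz, hu⟩ := R.inter_unique C hC A hA
      exact ⟨z, ⟨hz.2, hz.1⟩, fun w hw => hu w ⟨hw.2, hw.1⟩⟩
    have hψsmem : ∀ x ∈ 𝔲 ∩ R.core, ∀ y ∈ 𝔰₀ ∩ R.core, ∀ C ∈ R.fibs, x ∈ C →
        ∀ A ∈ R.fibu, y ∈ A → ψs (x, y) ∈ C ∩ A := by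
      intro x hx y hy C hC hxC A hA hyA
      have h1 := hψmem y hy x hx A hA hyA C hC hxC
      exact ⟨h1.2, h1.1⟩
    have hψs'mem : ∀ x ∈ 𝔲' ∩ R.core, ∀ y ∈ 𝔰₀ ∩ R.core, ∀ C ∈ R.fibs, x ∈ C →
        ∀ A ∈ R.fibu, y ∈ A → ψs' (x, y) ∈ C ∩ A := by
      intro x hx y hy C hC hxC A hA hyA
      have h1 := hψ'mem y hy x hx A hA hyA C hC hxC
      exact ⟨h1.2, h1.1⟩
    have hψsinj : Set.InjOn ψs ((𝔲 ∩ R.core) ×ˢ (𝔰₀ ∩ R.core)) := by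
      intro p hp q hq he
      have hps : p.swap ∈ (𝔰₀ ∩ R.core) ×ˢ (𝔲 ∩ R.core) := ⟨hp.2, hp.1⟩
      have hqs : q.swap ∈ (𝔰₀ ∩ R.core) ×ˢ (𝔲 ∩ R.core) := ⟨hq.2, hq.1⟩
      have h1 : p.swap = q.swap := hψinj hps hqs he
      have := congrArg Prod.swap h1
      simpa using this
    have hψs'inj : Set.InjOn ψs' ((𝔲' ∩ R.core) ×ˢ (𝔰₀ ∩ R.core)) := by
      intro p hp q hq he
      have hps : p.swap ∈ (𝔰₀ ∩ R.core) ×ˢ (𝔲' ∩ R.core) := ⟨hp.2, hp.1⟩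
      have hqs : q.swap ∈ (𝔰₀ ∩ R.core) ×ˢ (𝔲' ∩ R.core) := ⟨hq.2, hq.1⟩
      have h1 : p.swap = q.swap := hψ'inj hps hqs he
      have := congrArg Prod.swap h1
      simpa using this
    have hψsmeas : Measurable ψs := hψmeas.comp measurable_swap
    have hψs'meas : Measurable ψs' := hψ'meas.comp measurable_swap
    have hψsimg : ∀ E : Set (S × S), E ⊆ (𝔲 ∩ R.core) ×ˢ (𝔰₀ ∩ R.core) → MeasurableSet E →
        MeasurableSet (ψs '' E) := by
      intro Eset hEsub hEm
      have h1 : ψs '' Eset = ψ '' (Prod.swap ⁻¹' Eset) := by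
        rw [hψsdef, Set.image_comp, Set.image_swap_eq_preimage_swap]
      rw [h1]
      exact hψimg _ (fun p hp => ⟨(hEsub hp).2, (hEsub hp).1⟩)
        (hEm.preimage measurable_swap)
    have hmapS : Measure.map ψs (((Tu.ν ℓ).restrict (𝔲 ∩ R.core)).prod
        ((Ts.ν ℓs).restrict (𝔰₀ ∩ R.core))) = μ.restrict R.core := by
      rw [hψsdef, ← Measure.map_map hψmeas measurable_swap, Measure.prod_swap, hψmap]
    have hmapS' : Measure.map ψs' (((Tu.ν ℓ').restrict (𝔲' ∩ R.core)).prod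
        ((Ts.ν ℓs).restrict (𝔰₀ ∩ R.core))) = μ.restrict R.core := by
      rw [hψs'def, ← Measure.map_map hψ'meas measurable_swap, Measure.prod_swap, hψ'map]
    exact hol_key R.core R.fibu R.fibs hsubUS hcovU hcovS huniq' 𝔲 𝔲' 𝔰₀ h𝔲'
      ((Tu.ν ℓ).restrict (𝔲 ∩ R.core)) ((Tu.ν ℓ').restrict (𝔲' ∩ R.core))
      ((Ts.ν ℓs).restrict (𝔰₀ ∩ R.core)) hfm hfm' hfmu hmE hmE' hmEu hm0 hm'0 hmu0
      hmupos ψs ψs' hψsmem hψs'mem hψsinj hψs'inj hψsmeas hψs'meas hψsimg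
      (hmapS.trans hmapS'.symm) B hBsub hBnm


end
end

section
/- Let R be a compatible positive measure tartan. Then ν_𝔰(E^𝔰) is positive and independent of the choice of stable fiber 𝔰, and ν_𝔲(E^𝔲) is positive and independent of the choice of unstable fiber 𝔲; writing w^s(R) and w^u(R) for these common values (the stable and unstable widths of R), one has μ(R^⋔) = w^s(R) · w^u(R). -/
open MeasureTheory Set Function Topology Filter
open scoped ENNReal

noncomputable section

variable {S : Type} [TopologicalSpace S] [MeasurableSpace S]

/-- the stable and unstable widths of a compatible positive measure tartan
are well defined and positive, and their product is `μ(R^⋔)`. -/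
theorem tartan_widths
    {S : Type} [TopologicalSpace S] [T2Space S] [CompactSpace S]
    [ChartedSpace (EuclideanHalfSpace 2) S] [MeasurableSpace S] [BorelSpace S]
    (μ : Measure S) [IsProbabilityMeasure μ] (hμ : IsOUMeasure μ)
    (Ts Tu : MeasuredTurbulation μ) (htrans : Ts.TransversePair Tu)
    (R : Tartan Ts Tu) (hcomp : R.Compatible) (hpos : 0 < μ R.core) :
    ∃ ws wu : ℝ≥0∞, 0 < ws ∧ 0 < wu ∧
      (∀ 𝔰 ∈ R.fibs, ∀ ℓ ∈ Ts.lines, 𝔰 ⊆ ℓ → Ts.ν ℓ (𝔰 ∩ R.core) = ws) ∧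
      (∀ 𝔲 ∈ R.fibu, ∀ ℓ ∈ Tu.lines, 𝔲 ⊆ ℓ → Tu.ν ℓ (𝔲 ∩ R.core) = wu) ∧
      μ R.core = ws * wu := by
  classical
  -- Each stable fiber lies in a unique streamline, is nonempty, and has finite measure.
  have fibsArc : ∀ 𝔰 ∈ R.fibs, ∃ ℓ ∈ Ts.lines, 𝔰 ⊆ ℓ ∧ 𝔰.Nonempty ∧ Ts.ν ℓ 𝔰 < ⊤ := by
    obtain ⟨ords, ordu, hs, -, -, -⟩ := R.oriented
    intro 𝔰 h𝔰
    obtain ⟨ℓ, hℓ, f, hc, hi, hr, a, b, hab, hA, -⟩ := hs 𝔰 h𝔰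
    refine ⟨ℓ, hℓ, ?_, ?_, ?_⟩
    · rw [hA, ← hr]; exact Set.image_subset_range f _
    · exact ⟨f a, hA ▸ ⟨a, ⟨le_refl a, hab⟩, rfl⟩⟩
    · exact Ts.ν_arc_finite ℓ hℓ 𝔰 (f a) (f b) ⟨f, hc, hi, hr, a, b, hab, rfl, rfl, hA⟩
  have fibuArc : ∀ 𝔲 ∈ R.fibu, ∃ ℓ ∈ Tu.lines, 𝔲 ⊆ ℓ ∧ 𝔲.Nonempty ∧ Tu.ν ℓ 𝔲 < ⊤ := by
    obtain ⟨ords, ordu, -, hu, -, -⟩ := R.oriented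
    intro 𝔲 h𝔲
    obtain ⟨ℓ, hℓ, f, hc, hi, hr, a, b, hab, hA, -⟩ := hu 𝔲 h𝔲
    refine ⟨ℓ, hℓ, ?_, ?_, ?_⟩
    · rw [hA, ← hr]; exact Set.image_subset_range f _
    · exact ⟨f a, hA ▸ ⟨a, ⟨le_refl a, hab⟩, rfl⟩⟩
    · exact Tu.ν_arc_finite ℓ hℓ 𝔲 (f a) (f b) ⟨f, hc, hi, hr, a, b, hab, rfl, rfl, hA⟩
  -- Uniqueness of the containing streamline.
  have lineUniqS : ∀ A : Set S, A.Nonempty → ∀ ℓ ∈ Ts.lines, A ⊆ ℓ →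
      ∀ ℓ' ∈ Ts.lines, A ⊆ ℓ' → ℓ = ℓ' := by
    rintro A ⟨x, hx⟩ ℓ hℓ h1 ℓ' hℓ' h2
    by_contra hne
    exact Set.disjoint_left.mp (Ts.lines_disjoint hℓ hℓ' hne) (h1 hx) (h2 hx)
  have lineUniqU : ∀ A : Set S, A.Nonempty → ∀ ℓ ∈ Tu.lines, A ⊆ ℓ →
      ∀ ℓ' ∈ Tu.lines, A ⊆ ℓ' → ℓ = ℓ' := by
    rintro A ⟨x, hx⟩ ℓ hℓ h1 ℓ' hℓ' h2
    by_contra hne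
    exact Set.disjoint_left.mp (Tu.lines_disjoint hℓ hℓ' hne) (h1 hx) (h2 hx)
  -- Key identity from compatibility.
  have key : ∀ 𝔰 ∈ R.fibs, ∀ ℓs ∈ Ts.lines, 𝔰 ⊆ ℓs → ∀ 𝔲 ∈ R.fibu, ∀ ℓu ∈ Tu.lines,
      𝔲 ⊆ ℓu → Ts.ν ℓs (𝔰 ∩ R.core) * Tu.ν ℓu (𝔲 ∩ R.core) = μ R.core := by
    intro 𝔰 h𝔰 ℓs hℓs hsub 𝔲 h𝔲 ℓu hℓu hsubu
    obtain ⟨ℓu', hℓu', hsubu', hne', hfin⟩ := fibuArc 𝔲 h𝔲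
    obtain ⟨ψ, -, -, -, hmeas, -, hmap⟩ := hcomp 𝔰 h𝔰 𝔲 h𝔲 ℓs hℓs hsub ℓu hℓu hsubu
    haveI : SigmaFinite ((Tu.ν ℓu).restrict (𝔲 ∩ R.core)) := by
      have : IsFiniteMeasure ((Tu.ν ℓu).restrict (𝔲 ∩ R.core)) := by
        refine ⟨?_⟩
        rw [Measure.restrict_apply_univ]
        have : ℓu = ℓu' := lineUniqU 𝔲 hne' ℓu hℓu hsubu ℓu' hℓu' hsubu'
        exact lt_of_le_of_lt (measure_mono Set.inter_subset_left) (this ▸ hfin)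
      infer_instance
    have h1 := congrArg (fun m : Measure S => m Set.univ) hmap
    simp only [Measure.map_apply hmeas MeasurableSet.univ, Set.preimage_univ,
      Measure.restrict_apply_univ] at h1
    rw [← Set.univ_prod_univ, Measure.prod_prod, Measure.restrict_apply_univ,
      Measure.restrict_apply_univ] at h1
    exact h1
  -- Pick base fibers.
  have hcne : R.core.Nonempty := by
    by_contra h
    rw [Set.not_nonempty_iff_eq_empty] at h
    simp [h] at hpos
  obtain ⟨x0, hx0s, hx0u⟩ := hcne
  rw [← R.fibs_cover] at hx0s
  rw [← R.fibu_cover] at hx0u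
  obtain ⟨𝔰0, h𝔰0, hx𝔰0⟩ := hx0s
  obtain ⟨𝔲0, h𝔲0, hx𝔲0⟩ := hx0u
  obtain ⟨ℓs0, hℓs0, hsub0, hne0, hfin0⟩ := fibsArc 𝔰0 h𝔰0
  obtain ⟨ℓu0, hℓu0, husub0, hune0, hufin0⟩ := fibuArc 𝔲0 h𝔲0
  set ws := Ts.ν ℓs0 (𝔰0 ∩ R.core) with hws
  set wu := Tu.ν ℓu0 (𝔲0 ∩ R.core) with hwu
  have hmain : ws * wu = μ R.core := key 𝔰0 h𝔰0 ℓs0 hℓs0 hsub0 𝔲0 h𝔲0 ℓu0 hℓu0 husub0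
  have hws0 : ws ≠ 0 := by
    intro h
    rw [h, zero_mul] at hmain
    exact hpos.ne' hmain.symm
  have hwu0 : wu ≠ 0 := by
    intro h
    rw [h, mul_zero] at hmain
    exact hpos.ne' hmain.symm
  have hwsT : ws ≠ ⊤ :=
    (lt_of_le_of_lt (measure_mono Set.inter_subset_left) hfin0).ne
  have hwuT : wu ≠ ⊤ :=
    (lt_of_le_of_lt (measure_mono Set.inter_subset_left) hufin0).ne
  refine ⟨ws, wu, pos_iff_ne_zero.mpr hws0, pos_iff_ne_zero.mpr hwu0, ?_, ?_, hmain.symm⟩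
  · intro 𝔰 h𝔰 ℓ hℓ hsub
    have h1 : Ts.ν ℓ (𝔰 ∩ R.core) * wu = ws * wu := by
      rw [hmain]; exact key 𝔰 h𝔰 ℓ hℓ hsub 𝔲0 h𝔲0 ℓu0 hℓu0 husub0
    exact (ENNReal.mul_left_inj hwu0 hwuT).mp h1
  · intro 𝔲 h𝔲 ℓ hℓ hsub
    have h1 : ws * Tu.ν ℓ (𝔲 ∩ R.core) = ws * wu := by
      rw [hmain]; exact key 𝔰0 h𝔰0 ℓs0 hℓs0 hsub0 𝔲 h𝔲 ℓ hℓ hsub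
    exact (ENNReal.mul_right_inj hws0 hwsT).mp h1

end
end
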